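/- The edge polynomials h_1, …, h_N form a basis of the space of polynomials of degree at most N−1; equivalently, the linear map sending a polynomial q of degree ≤ N−1 to the vector of its sub-interval integrals (∫_{ξ_{j−1}}^{ξ_j} q)_{j=1}^{N} ∈ ℝ^N is a linear isomorphism. -/

import Mathlib

/-!
The map `Φ : q ↦ (∫_{ξ_{j-1}}^{ξ_j} q)_j` sends `h_i = -(l_0 + ⋯ + l_{i-1})'` to the `i`-th standard
basis vector: by the fundamental theorem of calculus `Φ(p') = (p(ξ_j) - p(ξ_{j-1}))_j`, and the
partial sum `l_0 + ⋯ + l_{i-1}` is `1` at the first `i` nodes and `0` at the others. Hence the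
`h_i` are linearly independent, and since `dim ℙ_{N-1} = N` they form a basis on which `Φ` is
bijective.
-/

open Polynomial

namespace Polynomial

theorem derivative_mem_degreeLT {R : Type*} [Semiring R] {p : R[X]} {n : ℕ}
    (hp : p.natDegree ≤ n) : derivative p ∈ degreeLT R n := by
  rcases eq_or_ne p 0 with rfl | hp0
  · simp
  · exact mem_degreeLT.2 ((degree_derivative_lt hp0).trans_le (degree_le_of_natDegree_le hp))

theorem eval_sum_of_eval_eq_ite {R ι : Type*} [CommSemiring R] [DecidableEq ι]
    {l : ι → R[X]} {ξ : ι → R} (hl : ∀ i j, (l i).eval (ξ j) = if i = j then 1 else 0)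
    (s : Finset ι) (m : ι) : (∑ k ∈ s, l k).eval (ξ m) = if m ∈ s then 1 else 0 := by
  simp only [eval_finsetSum, hl, Finset.sum_ite_eq']

theorem intervalIntegral_eval_derivative (p : ℝ[X]) (a b : ℝ) :
    ∫ s in a..b, (derivative p).eval s = p.eval b - p.eval a :=
  intervalIntegral.integral_deriv_eq_sub' (fun x => p.eval x) (by ext; simp)
    (fun x _ => p.differentiableAt) (derivative p).continuous.continuousOn

end Polynomial

section SubintervalIntegrals

variable {N : ℕ} (ξ : Fin (N + 1) → ℝ)

noncomputable def subintervalIntegrals : ℝ[X] →ₗ[ℝ] (Fin N → ℝ) where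
  toFun q j := ∫ s in ξ j.castSucc..ξ j.succ, q.eval s
  map_add' p q := funext fun _ => by
    simp only [eval_add, Pi.add_apply]
    exact intervalIntegral.integral_add (p.continuous.intervalIntegrable _ _)
      (q.continuous.intervalIntegrable _ _)
  map_smul' c p := funext fun _ => by
    simp only [eval_smul, smul_eq_mul, RingHom.id_apply, Pi.smul_apply]
    exact intervalIntegral.integral_const_mul _ _

theorem subintervalIntegrals_derivative (p : ℝ[X]) :
    subintervalIntegrals ξ (derivative p) = fun j => p.eval (ξ j.succ) - p.eval (ξ j.castSucc) :=
  funext fun _ => intervalIntegral_eval_derivative p _ _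

theorem subintervalIntegrals_neg_derivative_sum_lt {l : Fin (N + 1) → ℝ[X]}
    (hl : ∀ i j, (l i).eval (ξ j) = if i = j then 1 else 0) (i : Fin N) :
    subintervalIntegrals ξ
        (-∑ k : Fin (N + 1), if (k : ℕ) < (i : ℕ) + 1 then derivative (l k) else 0) =
      Pi.single i 1 := by
  rw [← Finset.sum_filter, ← derivative_sum, map_neg, subintervalIntegrals_derivative]
  funext j
  simp only [eval_sum_of_eval_eq_ite hl, Finset.mem_filter, Finset.mem_univ, true_and,
    Fin.val_succ, Fin.val_castSucc, Pi.neg_apply, Pi.single_apply, Fin.ext_iff]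
  split_ifs <;> first | omega | norm_num

end SubintervalIntegrals

section DualFamily

variable {K M : Type*} [Field K] [AddCommGroup M] [Module K M] {n : ℕ}
  {f : M →ₗ[K] (Fin n → K)} {v : Fin n → M}

theorem linearIndependent_of_map_eq_single (hf : ∀ i, f (v i) = Pi.single i 1) :
    LinearIndependent K v :=
  .of_comp f <| by
    convert (Pi.basisFun K (Fin n)).linearIndependent
    exact funext fun i => (hf i).trans (Pi.basisFun_apply K (Fin n) i).symm

variable {S : Submodule K M} [FiniteDimensional K S] (hS : Module.finrank K S = n)
  (hv : ∀ i, v i ∈ S) (hf : ∀ i, f (v i) = Pi.single i 1)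
include hS hv hf

theorem span_range_eq_of_map_eq_single : Submodule.span K (Set.range v) = S :=
  Submodule.eq_of_le_of_finrank_le (Submodule.span_le.2 (Set.range_subset_iff.2 hv)) <| by
    rw [hS, finrank_span_eq_card (linearIndependent_of_map_eq_single hf), Fintype.card_fin]

theorem bijective_comp_subtype_of_map_eq_single : Function.Bijective (f ∘ₗ S.subtype) := by
  have hsurj : Function.Surjective (f ∘ₗ S.subtype) := by
    rw [← LinearMap.range_eq_top, ← top_le_iff, ← (Pi.basisFun K (Fin n)).span_eq]
    refine Submodule.span_le.2 (Set.range_subset_iff.2 fun i => ⟨⟨v i, hv i⟩, ?_⟩)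
    simp [hf i, Pi.basisFun_apply]
  refine ⟨?_, hsurj⟩
  rwa [LinearMap.injective_iff_surjective_of_finrank_eq_finrank (by simp [hS])]

end DualFamily

theorem edge_polynomials_basis_and_subinterval_integral_iso
    (N : ℕ) (ξ : Fin (N + 1) → ℝ)
    (l : Fin (N + 1) → Polynomial ℝ)
    (hdeg : ∀ i, (l i).natDegree ≤ N)
    (hlag : ∀ i j, (l i).eval (ξ j) = if i = j then 1 else 0)
    (h : Fin N → Polynomial ℝ)
    (hdef : ∀ i : Fin N,
      h i = -∑ j : Fin (N + 1), if (j : ℕ) < (i : ℕ) + 1 then derivative (l j) else 0) :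
    (LinearIndependent ℝ h ∧ Submodule.span ℝ (Set.range h) = Polynomial.degreeLT ℝ N) ∧
    ∃ e : Polynomial.degreeLT ℝ N ≃ₗ[ℝ] (Fin N → ℝ),
      ∀ (q : Polynomial.degreeLT ℝ N) (j : Fin N),
        e q j = ∫ s in (ξ j.castSucc)..(ξ j.succ), (q : Polynomial ℝ).eval s := by
  have hmem : ∀ i, h i ∈ degreeLT ℝ N := fun i => by
    rw [hdef i]
    refine neg_mem (Submodule.sum_mem _ fun k _ => ?_)
    split_ifs
    exacts [derivative_mem_degreeLT (hdeg k), zero_mem _]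
  have hΦ : ∀ i, subintervalIntegrals ξ (h i) = Pi.single i 1 := fun i => by
    rw [hdef i, subintervalIntegrals_neg_derivative_sum_lt ξ hlag]
  have hdim : Module.finrank ℝ (degreeLT ℝ N) = N := by
    simp [Module.finrank_eq_card_basis (degreeLT.basis ℝ N)]
  exact ⟨⟨linearIndependent_of_map_eq_single hΦ, span_range_eq_of_map_eq_single hdim hmem hΦ⟩,
    .ofBijective _ (bijective_comp_subtype_of_map_eq_single hdim hmem hΦ), fun _ _ => rfl⟩
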